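/- Let ξ_n > 0 and η_n > 0 be sequences and let k_n be integers with 1 ≤ k_n < n such that n^{1/2} η_n (n − k_n)^{−1/2} → 0 as n → ∞. Then sup_{θ ∈ ℝ, 0 < σ < ∞} |p_n(θ, σ) − p̃_n(θ, σ)| → 0 as n → ∞. -/

import Mathlib

/-
Conditionally on the estimated scale `s`, the unknown-variance deletion probability is the
known-variance one with the window `η` replaced by `s η`. Since `Φ` is `(2π)^{-1/2}`-Lipschitz,
`s ↦ Φ(A + s h) - Φ(A - s h)` is `2 (2π)^{-1/2} |h|`-Lipschitz, so averaging over `ρ_m` moves it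
by at most `2 (2π)^{-1/2} |h| ∫ |s - 1| ρ_m`. The Gamma integral gives `∫ s² ρ_m = 1` and
`∫ s⁴ ρ_m = 1 + 2/m`, whence `∫ (s² - 1)² ρ_m = 2/m` and `∫ |s - 1| ρ_m ≤ √(2/m)`. With `h = √n η_n` and `m = n - k_n` the bound is a constant times
`√n η_n / √(n - k_n)`, uniformly in `θ` and `σ`.
-/

open MeasureTheory ProbabilityTheory Filter Set

/-- Standard normal cdf. -/
noncomputable def Phi (x : ℝ) : ℝ :=
  ∫ t in Iic x, (Real.sqrt (2 * Real.pi))⁻¹ * Real.exp (-t ^ 2 / 2)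

/-- Standard normal pdf. -/
noncomputable def stdPhi (t : ℝ) : ℝ :=
  (Real.sqrt (2 * Real.pi))⁻¹ * Real.exp (-t ^ 2 / 2)

/-- Extension of `Phi` to the extended reals, with `PhiE ⊤ = 1` and `PhiE ⊥ = 0`. -/
noncomputable def PhiE (z : EReal) : ℝ :=
  if z = ⊤ then 1 else if z = ⊥ then 0 else Phi z.toReal

/-- Density of `m^{-1/2}` times the square root of a chi-square with `m` degrees of freedom. -/
noncomputable def rho (m : ℕ) (s : ℝ) : ℝ :=
  if 0 < s then
    (2 : ℝ) ^ ((1 : ℝ) - (m : ℝ) / 2) * (Real.Gamma ((m : ℝ) / 2))⁻¹ * Real.sqrt m *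
      ((m : ℝ) * s ^ 2) ^ (((m : ℝ) - 1) / 2) * Real.exp (-(m : ℝ) * s ^ 2 / 2)
  else 0

/-- Known-variance variable deletion probability. -/
noncomputable def pdel (n : ℕ) (ξ η θ σ : ℝ) : ℝ :=
  Phi (Real.sqrt n * (-θ / (σ * ξ) + η)) - Phi (Real.sqrt n * (-θ / (σ * ξ) - η))

/-- Unknown-variance variable deletion probability with `m` degrees of freedom. -/
noncomputable def ptdel (n m : ℕ) (ξ η θ σ : ℝ) : ℝ :=
  ∫ s in Ioi (0 : ℝ),
    (Phi (Real.sqrt n * (-θ / (σ * ξ) + s * η)) -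
      Phi (Real.sqrt n * (-θ / (σ * ξ) - s * η))) * rho m s

open Real

lemma integrable_stdPhi : Integrable stdPhi := by
  have h : Integrable (fun t : ℝ => rexp (-(1 / 2 : ℝ) * t ^ 2)) :=
    integrable_exp_neg_mul_sq (by norm_num)
  refine (h.const_mul (√(2 * π))⁻¹).congr (ae_of_all _ fun t => ?_)
  simp only [stdPhi]
  ring_nf

lemma stdPhi_le (t : ℝ) : stdPhi t ≤ (√(2 * π))⁻¹ := by
  rw [stdPhi]
  exact mul_le_of_le_one_right (by positivity) (exp_le_one_iff.mpr (by nlinarith [sq_nonneg t]))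

lemma abs_Phi_sub_Phi_le (x y : ℝ) : |Phi x - Phi y| ≤ (√(2 * π))⁻¹ * |x - y| := by
  have hPhi : Phi x - Phi y = ∫ t in y..x, stdPhi t :=
    intervalIntegral.integral_Iic_sub_Iic integrable_stdPhi.integrableOn
      integrable_stdPhi.integrableOn
  rw [hPhi, ← norm_eq_abs]
  refine intervalIntegral.norm_integral_le_of_norm_le_const fun t _ => ?_
  rw [norm_of_nonneg (by unfold stdPhi; positivity)]
  exact stdPhi_le t

@[fun_prop]
lemma continuous_Phi : Continuous Phi :=
  (LipschitzWith.of_dist_le_mul (K := ⟨(√(2 * π))⁻¹, by positivity⟩) fun x y => by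
    rw [dist_eq, dist_eq]; exact abs_Phi_sub_Phi_le x y).continuous

lemma rho_nonneg (m : ℕ) (s : ℝ) : 0 ≤ rho m s := by
  unfold rho
  split_ifs
  · have : 0 ≤ Gamma ((m : ℝ) / 2) := Gamma_nonneg_of_nonneg (by positivity)
    positivity
  · exact le_rfl

lemma measurable_rho (m : ℕ) : Measurable (rho m) :=
  Measurable.ite (measurableSet_lt measurable_const measurable_id) (by fun_prop) measurable_const

section rho

variable {m : ℕ}

noncomputable def rhoConst (m : ℕ) : ℝ :=
  2 ^ (1 - (m : ℝ) / 2) * (Gamma ((m : ℝ) / 2))⁻¹ * (m : ℝ) ^ ((m : ℝ) / 2)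

lemma rho_eq_of_pos (hm : 0 < m) {s : ℝ} (hs : 0 < s) :
    rho m s = rhoConst m * s ^ ((m : ℝ) - 1) * rexp (-((m : ℝ) / 2) * s ^ (2 : ℝ)) := by
  have hm0 : (0 : ℝ) < m := Nat.cast_pos.mpr hm
  have hpow : ((m : ℝ) * s ^ 2) ^ (((m : ℝ) - 1) / 2)
      = (m : ℝ) ^ (((m : ℝ) - 1) / 2) * s ^ ((m : ℝ) - 1) := by
    rw [mul_rpow hm0.le (by positivity), ← rpow_natCast s 2, ← rpow_mul hs.le]
    congr 2
    push_cast
    ring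
  have hsqrt : √(m : ℝ) * (m : ℝ) ^ (((m : ℝ) - 1) / 2) = (m : ℝ) ^ ((m : ℝ) / 2) := by
    rw [sqrt_eq_rpow, ← rpow_add hm0]
    ring_nf
  rw [rho, if_pos hs, rhoConst, hpow, rpow_two, ← hsqrt,
    show -(m : ℝ) * s ^ 2 / 2 = -((m : ℝ) / 2) * s ^ 2 by ring]
  ring

lemma two_rpow_mul_rpow_mul_half_rpow {x : ℝ} (hx : 0 < x) (j : ℝ) :
    (2 : ℝ) ^ (1 - x / 2) * x ^ (x / 2) * ((x / 2) ^ (-(x + j) / 2) * (1 / 2))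
      = (2 / x) ^ (j / 2) := by
  have hhalf : (1 / 2 : ℝ) = rexp (log 2 * (-1)) := by
    rw [mul_neg_one, exp_neg, exp_log two_pos, one_div]
  rw [rpow_def_of_pos two_pos, rpow_def_of_pos hx, rpow_def_of_pos (by positivity : 0 < x / 2),
    rpow_def_of_pos (by positivity : 0 < 2 / x), log_div hx.ne' two_ne_zero,
    log_div two_ne_zero hx.ne', hhalf, ← exp_add, ← exp_add, ← exp_add]
  ring_nf

lemma integrableOn_rpow_mul_rho (hm : 0 < m) {j : ℝ} (hj : -(m : ℝ) < j) :
    IntegrableOn (fun s => s ^ j * rho m s) (Ioi 0) := by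
  refine IntegrableOn.congr_fun ((integrableOn_rpow_mul_exp_neg_mul_rpow (p := 2)
    (b := (m : ℝ) / 2) (by linarith : -1 < (m : ℝ) - 1 + j) two_pos
    (by positivity)).const_mul (rhoConst m)) (fun s hs => ?_) measurableSet_Ioi
  rw [rho_eq_of_pos hm hs, rpow_add hs]
  ring

lemma integral_rpow_mul_rho (hm : 0 < m) {j : ℝ} (hj : -(m : ℝ) < j) :
    ∫ s in Ioi 0, s ^ j * rho m s
      = (2 / m) ^ (j / 2) * Gamma (((m : ℝ) + j) / 2) / Gamma ((m : ℝ) / 2) := by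
  have hm0 : (0 : ℝ) < m := Nat.cast_pos.mpr hm
  have hcongr : ∫ s in Ioi 0, s ^ j * rho m s
      = ∫ s in Ioi 0, rhoConst m * (s ^ ((m : ℝ) - 1 + j) * rexp (-((m : ℝ) / 2) * s ^ (2 : ℝ))) :=
    setIntegral_congr_fun measurableSet_Ioi fun s hs => by
      rw [rho_eq_of_pos hm hs, rpow_add hs]
      ring
  rw [hcongr, integral_const_mul, integral_rpow_mul_exp_neg_mul_rpow two_pos (by linarith)
    (by positivity), show (m : ℝ) - 1 + j + 1 = m + j by ring, rhoConst,
    ← two_rpow_mul_rpow_mul_half_rpow hm0 j]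
  ring

lemma integrableOn_pow_mul_rho (hm : 0 < m) (k : ℕ) :
    IntegrableOn (fun s => s ^ k * rho m s) (Ioi 0) := by
  have hk : -(m : ℝ) < k := neg_lt_iff_pos_add.mpr (by positivity)
  simpa only [rpow_natCast] using integrableOn_rpow_mul_rho hm hk

lemma integral_pow_mul_rho (hm : 0 < m) (k : ℕ) :
    ∫ s in Ioi 0, s ^ k * rho m s
      = (2 / m) ^ ((k : ℝ) / 2) * Gamma (((m : ℝ) + k) / 2) / Gamma ((m : ℝ) / 2) := by
  have hk : -(m : ℝ) < k := neg_lt_iff_pos_add.mpr (by positivity)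
  simpa only [rpow_natCast] using integral_rpow_mul_rho hm hk

lemma integrableOn_rho (hm : 0 < m) : IntegrableOn (rho m) (Ioi 0) := by
  simpa using integrableOn_pow_mul_rho hm 0

lemma integral_rho (hm : 0 < m) : ∫ s in Ioi 0, rho m s = 1 := by
  have hG : Gamma ((m : ℝ) / 2) ≠ 0 := (Gamma_pos_of_pos (by positivity)).ne'
  simpa [hG] using integral_pow_mul_rho hm 0

lemma integral_sq_mul_rho (hm : 0 < m) : ∫ s in Ioi 0, s ^ 2 * rho m s = 1 := by
  have hG : Gamma ((m : ℝ) / 2) ≠ 0 := (Gamma_pos_of_pos (by positivity)).ne'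
  rw [integral_pow_mul_rho hm, show ((m : ℝ) + (2 : ℕ)) / 2 = m / 2 + 1 by push_cast; ring,
    Gamma_add_one (by positivity)]
  norm_num
  field_simp

lemma integral_pow_four_mul_rho (hm : 0 < m) :
    ∫ s in Ioi 0, s ^ 4 * rho m s = 1 + 2 / m := by
  have hG : Gamma ((m : ℝ) / 2) ≠ 0 := (Gamma_pos_of_pos (by positivity)).ne'
  rw [integral_pow_mul_rho hm, show ((m : ℝ) + (4 : ℕ)) / 2 = (m / 2 + 1) + 1 by push_cast; ring,
    Gamma_add_one (by positivity), Gamma_add_one (by positivity)]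
  norm_num
  field_simp

lemma integrableOn_abs_sub_one_mul_rho (hm : 0 < m) :
    IntegrableOn (fun s => |s - 1| * rho m s) (Ioi 0) := by
  refine IntegrableOn.congr_fun ((integrableOn_pow_mul_rho hm 1).sub (integrableOn_rho hm)).abs
    (fun s _ => ?_) measurableSet_Ioi
  rw [Pi.sub_apply, pow_one, ← sub_one_mul, abs_mul, abs_of_nonneg (rho_nonneg m s)]

lemma integrableOn_sq_sub_one_sq_mul_rho (hm : 0 < m) :
    IntegrableOn (fun s => (s ^ 2 - 1) ^ 2 * rho m s) (Ioi 0) :=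
  (((integrableOn_pow_mul_rho hm 4).sub ((integrableOn_pow_mul_rho hm 2).const_mul 2)).add
    (integrableOn_rho hm)).congr_fun
    (fun s _ => by simp only [Pi.add_apply, Pi.sub_apply]; ring) measurableSet_Ioi

lemma integral_sq_sub_one_sq_mul_rho (hm : 0 < m) :
    ∫ s in Ioi 0, (s ^ 2 - 1) ^ 2 * rho m s = 2 / (m : ℝ) := by
  have h4 := integrableOn_pow_mul_rho hm 4
  have h2 : IntegrableOn (fun s => 2 * (s ^ 2 * rho m s)) (Ioi 0) :=
    (integrableOn_pow_mul_rho hm 2).const_mul 2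
  have h42 : IntegrableOn (fun s => s ^ 4 * rho m s - 2 * (s ^ 2 * rho m s)) (Ioi 0) := h4.sub h2
  have hexpand : ∀ s, (s ^ 2 - 1) ^ 2 * rho m s
      = s ^ 4 * rho m s - 2 * (s ^ 2 * rho m s) + rho m s := fun s => by ring
  simp_rw [hexpand]
  rw [integral_add h42 (integrableOn_rho hm), integral_sub h4 h2, integral_const_mul,
    integral_pow_four_mul_rho hm, integral_sq_mul_rho hm, integral_rho hm]
  ring

lemma integral_abs_sub_one_mul_rho_le (hm : 0 < m) :
    ∫ s in Ioi 0, |s - 1| * rho m s ≤ √(2 / m) := by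
  set t := √(2 / m)
  have ht : 0 < t := sqrt_pos.mpr (by positivity)
  have ht2 : t ^ 2 = 2 / m := sq_sqrt (by positivity)
  -- AM-GM `|x| ≤ t/2 + x²/(2t)`; this `t` balances the two terms after integration
  have hpt : ∀ s ∈ Ioi (0 : ℝ), |s - 1| * rho m s
      ≤ t / 2 * rho m s + (2 * t)⁻¹ * ((s ^ 2 - 1) ^ 2 * rho m s) := by
    intro s hs
    have hsq : |s - 1| ≤ |s ^ 2 - 1| := by
      rw [show s ^ 2 - 1 = (s - 1) * (s + 1) by ring, abs_mul]
      exact le_mul_of_one_le_right (abs_nonneg _)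
        (by rw [abs_of_pos (by linarith [hs.out])]; linarith [hs.out])
    have hamgm : |s ^ 2 - 1| ≤ t / 2 + (2 * t)⁻¹ * (s ^ 2 - 1) ^ 2 := by
      rw [← sub_nonneg, show t / 2 + (2 * t)⁻¹ * (s ^ 2 - 1) ^ 2 - |s ^ 2 - 1|
          = (t - |s ^ 2 - 1|) ^ 2 / (2 * t) by rw [← sq_abs (s ^ 2 - 1)]; field_simp; ring]
      positivity
    calc |s - 1| * rho m s ≤ (t / 2 + (2 * t)⁻¹ * (s ^ 2 - 1) ^ 2) * rho m s :=
          mul_le_mul_of_nonneg_right (hsq.trans hamgm) (rho_nonneg m s)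
      _ = _ := by ring
  have hI : IntegrableOn (fun s => t / 2 * rho m s + (2 * t)⁻¹ * ((s ^ 2 - 1) ^ 2 * rho m s))
      (Ioi 0) := ((integrableOn_rho hm).const_mul (t / 2)).add
    ((integrableOn_sq_sub_one_sq_mul_rho hm).const_mul (2 * t)⁻¹)
  calc ∫ s in Ioi 0, |s - 1| * rho m s
      ≤ ∫ s in Ioi 0, t / 2 * rho m s + (2 * t)⁻¹ * ((s ^ 2 - 1) ^ 2 * rho m s) :=
        setIntegral_mono_on (integrableOn_abs_sub_one_mul_rho hm) hI measurableSet_Ioi hpt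
    _ = t / 2 + (2 * t)⁻¹ * t ^ 2 := by
        rw [integral_add ((integrableOn_rho hm).const_mul _)
          ((integrableOn_sq_sub_one_sq_mul_rho hm).const_mul _), integral_const_mul,
          integral_const_mul, integral_rho hm, integral_sq_sub_one_sq_mul_rho hm, ht2, mul_one]
    _ = t := by field_simp; ring

lemma abs_sub_integral_mul_rho_le (hm : 0 < m) {F : ℝ → ℝ} {L : ℝ} (hF : Continuous F)
    (hL : 0 ≤ L) (hFL : ∀ s, |F 1 - F s| ≤ L * |s - 1|) :
    |F 1 - ∫ s in Ioi 0, F s * rho m s| ≤ L * √(2 / m) := by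
  have hpt : ∀ s, |(F 1 - F s) * rho m s| ≤ L * (|s - 1| * rho m s) := fun s => by
    rw [abs_mul, abs_of_nonneg (rho_nonneg m s), ← mul_assoc]
    exact mul_le_mul_of_nonneg_right (hFL s) (rho_nonneg m s)
  have hdiff : IntegrableOn (fun s => (F 1 - F s) * rho m s) (Ioi 0) :=
    ((integrableOn_abs_sub_one_mul_rho hm).const_mul L).mono'
      (((continuous_const.sub hF).measurable.mul (measurable_rho m)).aestronglyMeasurable)
      (ae_of_all _ hpt)
  have hF1 : IntegrableOn (fun s => F 1 * rho m s) (Ioi 0) := (integrableOn_rho hm).const_mul _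
  have hFint : IntegrableOn (fun s => F s * rho m s) (Ioi 0) :=
    (hF1.sub hdiff).congr_fun (fun s _ => by simp only [Pi.sub_apply]; ring) measurableSet_Ioi
  have hsplit : F 1 - ∫ s in Ioi 0, F s * rho m s = ∫ s in Ioi 0, (F 1 - F s) * rho m s :=
    calc F 1 - ∫ s in Ioi 0, F s * rho m s
        = (∫ s in Ioi 0, F 1 * rho m s) - ∫ s in Ioi 0, F s * rho m s := by
          rw [integral_const_mul, integral_rho hm, mul_one]
      _ = ∫ s in Ioi 0, F 1 * rho m s - F s * rho m s := (integral_sub hF1 hFint).symm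
      _ = ∫ s in Ioi 0, (F 1 - F s) * rho m s := by simp_rw [sub_mul]
  calc |F 1 - ∫ s in Ioi 0, F s * rho m s|
      ≤ ∫ s in Ioi 0, |(F 1 - F s) * rho m s| := hsplit ▸ abs_integral_le_integral_abs
    _ ≤ ∫ s in Ioi 0, L * (|s - 1| * rho m s) :=
        setIntegral_mono_on hdiff.abs ((integrableOn_abs_sub_one_mul_rho hm).const_mul L)
          measurableSet_Ioi fun s _ => hpt s
    _ = L * ∫ s in Ioi 0, |s - 1| * rho m s := integral_const_mul _ _
    _ ≤ L * √(2 / m) := mul_le_mul_of_nonneg_left (integral_abs_sub_one_mul_rho_le hm) hL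

end rho

lemma abs_Phi_window_sub_le (A h s s' : ℝ) :
    |(Phi (A + s * h) - Phi (A - s * h)) - (Phi (A + s' * h) - Phi (A - s' * h))|
      ≤ 2 * (√(2 * π))⁻¹ * |h| * |s - s'| := by
  have hplus := abs_Phi_sub_Phi_le (A + s * h) (A + s' * h)
  have hminus := abs_Phi_sub_Phi_le (A - s' * h) (A - s * h)
  rw [show A + s * h - (A + s' * h) = (s - s') * h by ring, abs_mul] at hplus
  rw [show A - s' * h - (A - s * h) = (s - s') * h by ring, abs_mul] at hminus
  calc _ = |(Phi (A + s * h) - Phi (A + s' * h)) + (Phi (A - s' * h) - Phi (A - s * h))| := by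
        ring_nf
    _ ≤ _ := (abs_add_le _ _).trans (by linarith)

lemma abs_pdel_sub_ptdel_le {m : ℕ} (hm : 0 < m) (n : ℕ) (ξ η θ σ : ℝ) :
    |pdel n ξ η θ σ - ptdel n m ξ η θ σ| ≤ 2 * (√(2 * π))⁻¹ * |√n * η| * √(2 / m) := by
  set A := √n * (-θ / (σ * ξ))
  set F : ℝ → ℝ := fun s => Phi (A + s * (√n * η)) - Phi (A - s * (√n * η))
  have hpdel : pdel n ξ η θ σ = F 1 := by
    simp only [pdel, F, A, one_mul, mul_add, mul_sub]
  have hptdel : ptdel n m ξ η θ σ = ∫ s in Ioi 0, F s * rho m s := by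
    simp only [ptdel, F, A, mul_add, mul_sub, mul_left_comm (√(n : ℝ))]
  rw [hpdel, hptdel]
  refine abs_sub_integral_mul_rho_le hm (by simp only [F]; fun_prop) (by positivity) fun s => ?_
  simpa only [abs_sub_comm s 1] using abs_Phi_window_sub_le A (√n * η) 1 s

theorem stmt_7_general (ξ η : ℕ → ℝ)
    (k : ℕ → ℕ) (hk : ∀ n, 2 ≤ n → 1 ≤ k n ∧ k n < n)
    (hr : Tendsto (fun n : ℕ => Real.sqrt n * η n / Real.sqrt ((n - k n : ℕ) : ℝ))
      atTop (nhds 0)) :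
    ∀ ε > (0 : ℝ), ∀ᶠ n in atTop, ∀ θ σ : ℝ, 0 < σ →
      |pdel n (ξ n) (η n) θ σ - ptdel n (n - k n) (ξ n) (η n) θ σ| < ε := by
  intro ε hε
  set C := 2 * (√(2 * π))⁻¹ * √2
  have hsmall : ∀ᶠ n : ℕ in atTop, C * |√n * η n / √((n - k n : ℕ) : ℝ)| < ε := by
    simpa using (hr.abs.const_mul C).eventually (gt_mem_nhds (by simpa using hε))
  filter_upwards [hsmall, eventually_ge_atTop 2] with n hn hn2 θ σ _
  calc _ ≤ 2 * (√(2 * π))⁻¹ * |√n * η n| * √(2 / (n - k n : ℕ)) :=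
        abs_pdel_sub_ptdel_le (Nat.sub_pos_of_lt (hk n hn2).2) n (ξ n) (η n) θ σ
    _ = C * |√n * η n / √((n - k n : ℕ) : ℝ)| := by
        rw [abs_div, abs_of_nonneg (sqrt_nonneg _), sqrt_div zero_le_two]
        ring
    _ < ε := hn

/-- uniform closeness of the known- and unknown-variance deletion
probabilities when `n^{1/2} η_n (n - k_n)^{-1/2} → 0`. -/
theorem stmt_7 (ξ η : ℕ → ℝ) (hξ : ∀ n, 0 < ξ n) (hη : ∀ n, 0 < η n)
    (k : ℕ → ℕ) (hk : ∀ n, 2 ≤ n → 1 ≤ k n ∧ k n < n)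
    (hr : Tendsto (fun n : ℕ => Real.sqrt n * η n / Real.sqrt ((n - k n : ℕ) : ℝ))
      atTop (nhds 0)) :
    ∀ ε > (0 : ℝ), ∀ᶠ n in atTop, ∀ θ σ : ℝ, 0 < σ →
      |pdel n (ξ n) (η n) θ σ - ptdel n (n - k n) (ξ n) (η n) θ σ| < ε :=
  stmt_7_general ξ η k hk hr
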